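/- arXiv:2512.06505 — 2 statements merged into one kernel-verified Lean document; each statement's English description precedes it below -/
import Mathlib

section
/- The call exercise boundary S̄_C(q) = α_C(q)K/(α_C(q)−1) is strictly decreasing in q with derivative ∂S̄_C/∂q = −K/(σ²(α_C−1)² ᾱ) < 0, and S̄_C(q) → K as q → ∞. -/
/-!
Writing `S̄ = α K / (α - 1) = K + K / (α - 1)`, every claim about the boundary reduces to the
exponent `α_C`: it exceeds `1`, increases strictly in `q` with derivative `1 / (σ² ᾱ)`, and tends
to infinity. Since `ᾱ²` is affine in `q` with slope `2 / σ² > 0`, these follow from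
`ᾱ > |r / σ² + 1 / 2|` (as `r + q > 0`), monotonicity of `√` and the chain rule.
-/

open Filter Set Topology

section Boundary

variable {α : ℝ → ℝ}

lemma mul_div_sub_one_eq_add (K : ℝ) {x : ℝ} (hx : x ≠ 1) :
    x * K / (x - 1) = K + K / (x - 1) := by
  field_simp [sub_ne_zero.2 hx]
  ring

theorem HasDerivAt.mul_div_sub_one {α' x : ℝ} (K : ℝ) (hα : HasDerivAt α α' x) (hx : α x ≠ 1) :
    HasDerivAt (fun y => α y * K / (α y - 1)) (-(K * α') / (α x - 1) ^ 2) x :=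
  ((hα.mul_const K).div (hα.sub_const 1) (sub_ne_zero.2 hx)).congr_deriv (by ring)

theorem StrictMonoOn.mul_div_sub_one {s : Set ℝ} {K : ℝ} (hK : 0 < K) (hα : StrictMonoOn α s)
    (h1 : ∀ x ∈ s, 1 < α x) : StrictAntiOn (fun y => α y * K / (α y - 1)) s := by
  intro a ha b hb hab
  simp only [mul_div_sub_one_eq_add K (h1 a ha).ne', mul_div_sub_one_eq_add K (h1 b hb).ne']
  have := div_lt_div_of_pos_left hK (sub_pos.2 (h1 a ha)) (sub_lt_sub_right (hα ha hb hab) 1)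
  linarith

theorem Filter.Tendsto.mul_div_sub_one {l : Filter ℝ} (K : ℝ) (hα : Tendsto α l atTop) :
    Tendsto (fun y => α y * K / (α y - 1)) l (𝓝 K) := by
  have hsub : Tendsto (fun y => α y - 1) l atTop := tendsto_atTop_add_const_right _ _ hα
  have hlim : Tendsto (fun y => K + K / (α y - 1)) l (𝓝 (K + 0)) :=
    tendsto_const_nhds.add (tendsto_const_nhds.div_atTop hsub)
  rw [add_zero] at hlim
  refine hlim.congr' ?_
  filter_upwards [hα.eventually_gt_atTop 1] with y hy
  exact (mul_div_sub_one_eq_add K hy.ne').symm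

end Boundary

section Exponent

variable {r σ q : ℝ}

/-- `ᾱ(q) ^ 2` -/
noncomputable def callDiscriminant (r σ q : ℝ) : ℝ :=
  (r / σ ^ 2 + 1 / 2) ^ 2 + 2 * (r + q) / σ ^ 2

/-- `α_C(q)` -/
noncomputable def callExponent (r σ q : ℝ) : ℝ := √(callDiscriminant r σ q) - r / σ ^ 2 + 1 / 2

lemma callDiscriminant_strictMono (hσ : σ ≠ 0) : StrictMono (callDiscriminant r σ) := by
  intro a b hab
  unfold callDiscriminant
  gcongr

lemma sq_lt_callDiscriminant (hσ : σ ≠ 0) (h : 0 < r + q) :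
    (r / σ ^ 2 + 1 / 2) ^ 2 < callDiscriminant r σ q := by
  unfold callDiscriminant
  have : 0 < 2 * (r + q) / σ ^ 2 := by positivity
  linarith

lemma callDiscriminant_pos (hσ : σ ≠ 0) (h : 0 < r + q) : 0 < callDiscriminant r σ q :=
  (sq_nonneg _).trans_lt (sq_lt_callDiscriminant hσ h)

lemma one_lt_callExponent (hσ : σ ≠ 0) (h : 0 < r + q) : 1 < callExponent r σ q := by
  have hlt : |r / σ ^ 2 + 1 / 2| < √(callDiscriminant r σ q) := by
    rw [← Real.sqrt_sq_eq_abs]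
    exact Real.sqrt_lt_sqrt (sq_nonneg _) (sq_lt_callDiscriminant hσ h)
  have := le_abs_self (r / σ ^ 2 + 1 / 2)
  unfold callExponent
  linarith

lemma callExponent_strictMonoOn (hσ : σ ≠ 0) : StrictMonoOn (callExponent r σ) (Ioi (-r)) := by
  intro a ha b _ hab
  have hsqrt := Real.sqrt_lt_sqrt (callDiscriminant_pos hσ (neg_lt_iff_pos_add'.1 ha)).le
    (callDiscriminant_strictMono hσ hab)
  unfold callExponent
  linarith

lemma hasDerivAt_callExponent (hσ : σ ≠ 0) (h : 0 < r + q) :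
    HasDerivAt (callExponent r σ) (1 / (σ ^ 2 * √(callDiscriminant r σ q))) q := by
  have hdisc : HasDerivAt (callDiscriminant r σ) (2 / σ ^ 2) q :=
    ((((hasDerivAt_id q).const_add r).const_mul 2).div_const (σ ^ 2)).const_add
      ((r / σ ^ 2 + 1 / 2) ^ 2) |>.congr_deriv (by ring)
  have hpos := Real.sqrt_pos.2 (callDiscriminant_pos hσ h)
  refine (((hdisc.sqrt (callDiscriminant_pos hσ h).ne').sub_const _).add_const _).congr_deriv ?_
  field_simp

lemma tendsto_callExponent_atTop (hσ : σ ≠ 0) : Tendsto (callExponent r σ) atTop atTop := by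
  have hdisc : Tendsto (callDiscriminant r σ) atTop atTop :=
    tendsto_atTop_add_const_left _ _ <| Tendsto.atTop_div_const (by positivity) <|
      Tendsto.const_mul_atTop two_pos <| tendsto_atTop_add_const_left _ r tendsto_id
  refine (tendsto_atTop_add_const_right _ (1 / 2 - r / σ ^ 2)
    (Real.tendsto_sqrt_atTop.comp hdisc)).congr fun q => ?_
  simp only [Function.comp, callExponent]
  ring

end Exponent

/-- The call exercise boundary S̄_C(q) = α_C(q)K/(α_C(q)−1) is strictly
decreasing in q with ∂S̄_C/∂q = −K/(σ²(α_C−1)² ᾱ) < 0, and S̄_C(q) → K as q → ∞. -/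
theorem ampo_call_boundary_decreasing (r σ q K : ℝ) (hr : 0 ≤ r) (hσ : 0 < σ) (hq : 0 < q)
    (hK : 0 < K)
    (αC : ℝ → ℝ)
    (hαC : ∀ q' : ℝ, αC q' =
      Real.sqrt ((r / σ ^ 2 + 1 / 2) ^ 2 + 2 * (r + q') / σ ^ 2) - r / σ ^ 2 + 1 / 2)
    (ᾱ : ℝ) (hᾱ : ᾱ = Real.sqrt ((r / σ ^ 2 + 1 / 2) ^ 2 + 2 * (r + q) / σ ^ 2))
    (SC : ℝ → ℝ) (hSC : ∀ q' : ℝ, SC q' = αC q' * K / (αC q' - 1)) :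
    HasDerivAt SC (-K / (σ ^ 2 * (αC q - 1) ^ 2 * ᾱ)) q ∧
      -K / (σ ^ 2 * (αC q - 1) ^ 2 * ᾱ) < 0 ∧
      StrictAntiOn SC (Set.Ioi 0) ∧
      Filter.Tendsto SC Filter.atTop (nhds K) := by
  have hσ0 : σ ≠ 0 := hσ.ne'
  have hrq : 0 < r + q := by linarith
  obtain rfl : αC = callExponent r σ := funext hαC
  obtain rfl : SC = fun q' => callExponent r σ q' * K / (callExponent r σ q' - 1) := funext hSC
  obtain rfl : ᾱ = √(callDiscriminant r σ q) := hᾱ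
  have hα1 := sub_pos.2 (one_lt_callExponent hσ0 hrq)
  have hᾱpos := Real.sqrt_pos.2 (callDiscriminant_pos hσ0 hrq)
  refine ⟨?_, div_neg_of_neg_of_pos (neg_neg_of_pos hK) (by positivity), ?_,
    (tendsto_callExponent_atTop hσ0).mul_div_sub_one K⟩
  · refine ((hasDerivAt_callExponent hσ0 hrq).mul_div_sub_one K
      (sub_pos.1 hα1).ne').congr_deriv ?_
    field_simp
  · refine ((callExponent_strictMonoOn hσ0).mul_div_sub_one hK fun x hx =>
      one_lt_callExponent hσ0 (neg_lt_iff_pos_add'.1 hx)).mono (Ioi_subset_Ioi ?_)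
    linarith
end

section
/- The map σ ↦ α_C (with r ≥ 0, q > 0 fixed) is strictly decreasing on (0, ∞): ∂α_C/∂σ = (1/σ³)[2r − (2r² + σ²(3r+2q))/(σ² ᾱ)] < 0, where ᾱ = sqrt((r/σ² + 1/2)² + 2(r+q)/σ²). -/
/-! The derivative is computed by the chain rule. Its sign is that of `2 r σ² ᾱ - C`, where
`C = 2 r² + σ² (3 r + 2 q)` is positive; since `(σ² ᾱ)² = (r + σ²/2)² + 2 σ² (r + q)`, one gets
`C² - (2 r σ² ᾱ)² = 4 σ⁴ (2 r + q) (r + q) > 0`, so the derivative is negative on `(0, ∞)`. -/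

open Real

noncomputable def alphaBar (r q σ : ℝ) : ℝ :=
  √((r / σ ^ 2 + 1 / 2) ^ 2 + 2 * (r + q) / σ ^ 2)

noncomputable def alphaC (r q σ : ℝ) : ℝ :=
  alphaBar r q σ - r / σ ^ 2 + 1 / 2

noncomputable def alphaCDeriv (r q σ : ℝ) : ℝ :=
  1 / σ ^ 3 * (2 * r - (2 * r ^ 2 + σ ^ 2 * (3 * r + 2 * q)) / (σ ^ 2 * alphaBar r q σ))

lemma hasDerivAt_div_sq (c : ℝ) {x : ℝ} (hx : x ≠ 0) :
    HasDerivAt (fun y : ℝ => c / y ^ 2) (-2 * c / x ^ 3) x := by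
  refine ((hasDerivAt_const x c).fun_div (hasDerivAt_pow 2 x) (pow_ne_zero 2 hx)).congr_deriv ?_
  field_simp
  ring

section

variable {r q : ℝ}

lemma alphaBar_radicand_pos (hr : 0 ≤ r) (hrq : 0 ≤ r + q) (σ : ℝ) :
    0 < (r / σ ^ 2 + 1 / 2) ^ 2 + 2 * (r + q) / σ ^ 2 := by
  have : 0 < r / σ ^ 2 + 1 / 2 := by positivity
  positivity

lemma alphaBar_pos (hr : 0 ≤ r) (hrq : 0 ≤ r + q) (σ : ℝ) : 0 < alphaBar r q σ :=
  sqrt_pos.2 (alphaBar_radicand_pos hr hrq σ)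

lemma sq_mul_alphaBar_sq (hr : 0 ≤ r) (hrq : 0 ≤ r + q) {σ : ℝ} (hσ : σ ≠ 0) :
    (σ ^ 2 * alphaBar r q σ) ^ 2 = (r + σ ^ 2 / 2) ^ 2 + 2 * σ ^ 2 * (r + q) := by
  rw [mul_pow, alphaBar, sq_sqrt (alphaBar_radicand_pos hr hrq σ).le]
  field_simp

lemma hasDerivAt_alphaBar (hr : 0 ≤ r) (hrq : 0 ≤ r + q) {σ : ℝ} (hσ : σ ≠ 0) :
    HasDerivAt (alphaBar r q)
      (-(2 * r ^ 2 + σ ^ 2 * (3 * r + 2 * q)) / (σ ^ 5 * alphaBar r q σ)) σ := by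
  have hU := (((hasDerivAt_div_sq r hσ).add_const (1 / 2)).fun_pow 2).fun_add
    (hasDerivAt_div_sq (2 * (r + q)) hσ)
  have h : HasDerivAt (alphaBar r q) _ σ := hU.sqrt (alphaBar_radicand_pos hr hrq σ).ne'
  rw [← alphaBar, Nat.add_one_sub_one, pow_one] at h
  refine h.congr_deriv ?_
  have := (alphaBar_pos hr hrq σ).ne'
  field_simp
  ring

lemma hasDerivAt_alphaC (hr : 0 ≤ r) (hrq : 0 ≤ r + q) {σ : ℝ} (hσ : σ ≠ 0) :
    HasDerivAt (alphaC r q) (alphaCDeriv r q σ) σ := by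
  refine (((hasDerivAt_alphaBar hr hrq hσ).fun_sub (hasDerivAt_div_sq r hσ)).add_const
    (1 / 2)).congr_deriv ?_
  have := (alphaBar_pos hr hrq σ).ne'
  rw [alphaCDeriv]
  field_simp
  ring

lemma two_mul_mul_sq_mul_alphaBar_lt (hr : 0 ≤ r) (hq : 0 < q) {σ : ℝ} (hσ : σ ≠ 0) :
    2 * r * (σ ^ 2 * alphaBar r q σ) < 2 * r ^ 2 + σ ^ 2 * (3 * r + 2 * q) := by
  have hrq : 0 ≤ r + q := by linarith
  refine lt_of_pow_lt_pow_left₀ 2 (by positivity) ?_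
  calc (2 * r * (σ ^ 2 * alphaBar r q σ)) ^ 2
      = (2 * r ^ 2 + σ ^ 2 * (3 * r + 2 * q)) ^ 2 - 4 * (σ ^ 2) ^ 2 * (2 * r + q) * (r + q) := by
        rw [mul_pow, sq_mul_alphaBar_sq hr hrq hσ]; ring
    _ < (2 * r ^ 2 + σ ^ 2 * (3 * r + 2 * q)) ^ 2 := by
        have : 0 < 4 * (σ ^ 2) ^ 2 * (2 * r + q) * (r + q) := by
          have : 0 < 2 * r + q := by linarith
          have : 0 < r + q := by linarith
          positivity
        linarith

lemma alphaCDeriv_neg (hr : 0 ≤ r) (hq : 0 < q) {σ : ℝ} (hσ : 0 < σ) : alphaCDeriv r q σ < 0 := by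
  have hpos : 0 < σ ^ 2 * alphaBar r q σ := by
    have := alphaBar_pos hr (by linarith : 0 ≤ r + q) σ
    positivity
  refine mul_neg_of_pos_of_neg (by positivity) ?_
  rw [sub_neg, lt_div_iff₀ hpos]
  exact two_mul_mul_sq_mul_alphaBar_lt hr hq hσ.ne'

lemma strictAntiOn_alphaC (hr : 0 ≤ r) (hq : 0 < q) : StrictAntiOn (alphaC r q) (Set.Ioi 0) := by
  have hrq : 0 ≤ r + q := by linarith
  refine strictAntiOn_of_hasDerivWithinAt_neg (f' := alphaCDeriv r q) (convex_Ioi 0)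
    (fun σ hσ => (hasDerivAt_alphaC hr hrq (ne_of_gt hσ)).continuousAt.continuousWithinAt)
    (fun σ hσ => ?_) (fun σ hσ => ?_)
  · rw [interior_Ioi] at hσ
    exact (hasDerivAt_alphaC hr hrq (ne_of_gt hσ)).hasDerivWithinAt
  · rw [interior_Ioi] at hσ
    exact alphaCDeriv_neg hr hq hσ

end

/-- The map σ ↦ α_C (r ≥ 0, q > 0 fixed) is strictly decreasing on (0, ∞):
∂α_C/∂σ = (1/σ³)[2r − (2r² + σ²(3r+2q))/(σ² ᾱ)] < 0,
where ᾱ = sqrt((r/σ² + 1/2)² + 2(r+q)/σ²). -/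
theorem ampo_alphaC_decreasing_in_sigma (r q σ : ℝ) (hr : 0 ≤ r) (hq : 0 < q) (hσ : 0 < σ)
    (ᾱ : ℝ) (hᾱ : ᾱ = Real.sqrt ((r / σ ^ 2 + 1 / 2) ^ 2 + 2 * (r + q) / σ ^ 2)) :
    StrictAntiOn
      (fun σ' : ℝ =>
        Real.sqrt ((r / σ' ^ 2 + 1 / 2) ^ 2 + 2 * (r + q) / σ' ^ 2) - r / σ' ^ 2 + 1 / 2)
      (Set.Ioi 0) ∧
    HasDerivAt
      (fun σ' : ℝ =>
        Real.sqrt ((r / σ' ^ 2 + 1 / 2) ^ 2 + 2 * (r + q) / σ' ^ 2) - r / σ' ^ 2 + 1 / 2)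
      (1 / σ ^ 3 * (2 * r - (2 * r ^ 2 + σ ^ 2 * (3 * r + 2 * q)) / (σ ^ 2 * ᾱ))) σ ∧
    1 / σ ^ 3 * (2 * r - (2 * r ^ 2 + σ ^ 2 * (3 * r + 2 * q)) / (σ ^ 2 * ᾱ)) < 0 := by
  subst hᾱ
  exact ⟨strictAntiOn_alphaC hr hq, hasDerivAt_alphaC hr (by linarith) hσ.ne',
    alphaCDeriv_neg hr hq hσ⟩
end
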